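/- arXiv:2007.12950 — 2 statements merged into one kernel-verified Lean document; each statement's English description precedes it below -/
import Mathlib

section
/- Let p(a_B,a_C,b_A,b_C) be an ε₁-trilocal behaviour (admitting decomposition p = Σ_{λ,α,β,γ} p(λ)p(α,β,γ|λ) p(a|β,γ)p(b|α,γ)p(c|α,β) with ε₁ p(α)p(β)p(γ) ≤ p(α,β,γ|λ) ≤ ε₂ p(α)p(β)p(γ)) satisfying the consistency condition p(A_C=C_A ∧ B_C=C_B)=1, with deterministic local response functions. Then for all a_B,b_A and all a_C,b_C with p(a_C)>0, p(b_C)>0: p(a_B,a_C,b_A,b_C) ≥ ξ₁ Σ_γ p(γ) p(a_B|a_C,γ) p(b_A|b_C,γ), where ξ₁ = (ε₁³/ε₂⁶)·min_{a_C: p(a_C)>0} p(a_C) · min_{b_C: p(b_C)>0} p(b_C) and the conditionals p(a_B|a_C,γ), p(b_A|b_C,γ) are suitable response distributions. -/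
/-!
Consistency forces every hidden state `(λ, α, β, γ)` of positive weight to answer `a_C = c_A`
and `b_C = c_B`, so Alice's `a_C`-marginal given `(β, γ)` equals Charlie's `c_A`-marginal given
`(α, β)`: two probability vectors whose product vanishes off the diagonal coincide. The lower
bound `ε₁ p(α) p(β) p(γ)` makes the support of the sources a product, and Charlie does not see
`γ`, so Alice's `a_C`-marginal given `(β, γ)` is the same for every `γ` with `p(γ) > 0`;
averaging it over `β` gives `p(a_C)`. Hence `Σ_β p(β) p(a_B, a_C | β, γ) = p(a_C) F(a_B | a_C, γ)`
for the averaged response `F`, likewise for Bob, and the lower bound once more gives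
`p(a_B, a_C, b_A, b_C) ≥ ε₁ Σ_γ p(γ) p(a_C) F p(b_C) G ≥ ε₁ m_A m_B Σ_γ p(γ) F G`.
Since `F` and `G` do not depend on `λ`, averaging `p(γ | λ)` over `λ` gives back `p(γ)`,
and `ε₁³ / ε₂⁶ ≤ ε₁`.
-/

open Finset

section Normalize
variable {X : Type*} [Fintype X]

noncomputable def normalizeOrUniform (f : X → ℝ) (x : X) : ℝ :=
  if ∑ y, f y = 0 then (Fintype.card X : ℝ)⁻¹ else f x / ∑ y, f y

lemma normalizeOrUniform_nonneg {f : X → ℝ} (hf : ∀ x, 0 ≤ f x) (x : X) :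
    0 ≤ normalizeOrUniform f x := by
  unfold normalizeOrUniform
  split_ifs
  · positivity
  · exact div_nonneg (hf x) (sum_nonneg fun y _ => hf y)

lemma sum_normalizeOrUniform [Nonempty X] (f : X → ℝ) : ∑ x, normalizeOrUniform f x = 1 := by
  unfold normalizeOrUniform
  split_ifs with h
  · simp
  · rw [← sum_div, div_self h]

lemma normalizeOrUniform_mul_sum {f : X → ℝ} (hf : ∀ x, 0 ≤ f x) (x : X) :
    normalizeOrUniform f x * ∑ y, f y = f x := by
  unfold normalizeOrUniform
  split_ifs with h
  · rw [h, mul_zero]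
    exact (congrFun ((Fintype.sum_eq_zero_iff_of_nonneg hf).1 h) x).symm
  · exact div_mul_cancel₀ _ h

lemma normalizeOrUniform_mul_le {f : X → ℝ} (hf : ∀ x, 0 ≤ f x) {m : ℝ} (hm : m ≤ ∑ y, f y)
    (x : X) : normalizeOrUniform f x * m ≤ f x :=
  (mul_le_mul_of_nonneg_left hm (normalizeOrUniform_nonneg hf x)).trans_eq
    (normalizeOrUniform_mul_sum hf x)

lemma mul_mul_normalizeOrUniform_le {Y : Type*} [Fintype Y] {f : X → ℝ} {g : Y → ℝ}
    (hf : ∀ x, 0 ≤ f x) (hg : ∀ y, 0 ≤ g y) {c m n : ℝ} (hc : 0 ≤ c) (hn : 0 ≤ n)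
    (h : 0 < c → m ≤ ∑ x, f x ∧ n ≤ ∑ y, g y) (x : X) (y : Y) :
    m * n * (c * normalizeOrUniform f x * normalizeOrUniform g y) ≤ c * f x * g y := by
  rcases hc.eq_or_lt with hc0 | hc0
  · simp [← hc0]
  obtain ⟨hm, hn'⟩ := h hc0
  calc m * n * (c * normalizeOrUniform f x * normalizeOrUniform g y)
      = c * (normalizeOrUniform f x * m) * (normalizeOrUniform g y * n) := by ring
    _ ≤ c * f x * g y :=
      mul_le_mul (mul_le_mul_of_nonneg_left (normalizeOrUniform_mul_le hf hm x) hc)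
        (normalizeOrUniform_mul_le hg hn' y) (mul_nonneg (normalizeOrUniform_nonneg hg y) hn)
        (mul_nonneg hc (hf x))

end Normalize

/-- The paper's `p(x | y, z)` for a party answering `(x, y)` to the sources `s ∼ p` and `z`,
with `s` averaged out. -/
noncomputable def averagedResponse {S Z X Y : Type*} [Fintype S] [Fintype X]
    (p : S → ℝ) (r : S → Z → X → Y → ℝ) (y : Y) (z : Z) : X → ℝ :=
  normalizeOrUniform fun x => ∑ s, p s * r s z x y

lemma averagedResponse_nonneg {S Z X Y : Type*} [Fintype S] [Fintype X] {p : S → ℝ}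
    {r : S → Z → X → Y → ℝ} (hp : ∀ s, 0 ≤ p s) (hr : ∀ s z x y, 0 ≤ r s z x y) (y : Y) (z : Z)
    (x : X) : 0 ≤ averagedResponse p r y z x :=
  normalizeOrUniform_nonneg (fun x => sum_nonneg fun s _ => mul_nonneg (hp s) (hr s z x y)) x

section Distributions
variable {X Y Z : Type*} [Fintype X] [Fintype Y] [Fintype Z]

lemma eq_of_mul_eq_zero_of_ne {p q : X → ℝ} (hp : ∑ x, p x = 1) (hq : ∑ x, q x = 1)
    (h : ∀ x y, x ≠ y → p x * q y = 0) : p = q := by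
  -- both `p x` and `q x` equal `p x * q x`
  have diag : ∀ x, p x * ∑ y, q y = q x * ∑ y, p y := fun x => by
    rw [mul_sum, mul_sum, sum_eq_single x (fun y _ hy => h x y hy.symm) (by simp),
      sum_eq_single x (fun y _ hy => by rw [mul_comm]; exact h y x hy) (by simp), mul_comm]
  funext x
  simpa [hp, hq] using diag x

lemma sum_eq_sum_of_mul_eq_zero_of_ne {p : X → Y → ℝ} {r : Y → Z → ℝ}
    (hp : ∑ x, ∑ y, p x y = 1) (hr : ∑ y, ∑ z, r y z = 1)
    (h : ∀ x y y' z, y ≠ y' → p x y * r y' z = 0) (y : Y) :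
    ∑ x, p x y = ∑ z, r y z := by
  refine congrFun (eq_of_mul_eq_zero_of_ne (p := fun y => ∑ x, p x y) ?_ hr fun y y' hy => ?_) y
  · rwa [sum_comm]
  · simp only [sum_mul_sum, h _ y y' _ hy, sum_const_zero]

lemma sum_mul_sum_sum_nonneg {Λ : Type*} [Fintype Λ] {pl : Λ → ℝ} {g : Λ → X → Y → ℝ}
    (hpl : ∀ l, 0 ≤ pl l) (hg : ∀ l x y, 0 ≤ g l x y) :
    0 ≤ ∑ l, pl l * ∑ x, ∑ y, g l x y :=
  sum_nonneg fun l _ => mul_nonneg (hpl l) (sum_nonneg fun x _ => sum_nonneg fun y _ => hg l x y)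

lemma sum_mul_sum_sum_pos {Λ : Type*} [Fintype Λ] {pl : Λ → ℝ} {g : Λ → X → Y → ℝ}
    (hpl : ∀ l, 0 ≤ pl l) (hg : ∀ l x y, 0 ≤ g l x y) {l : Λ} {x : X} {y : Y}
    (h : 0 < pl l * g l x y) : 0 < ∑ l, pl l * ∑ x, ∑ y, g l x y := by
  refine h.trans_le ((mul_le_mul_of_nonneg_left ?_ (hpl l)).trans
    (single_le_sum (fun l _ => mul_nonneg (hpl l)
      (sum_nonneg fun x _ => sum_nonneg fun y _ => hg l x y)) (mem_univ l)))
  exact (single_le_sum (fun y _ => hg l x y) (mem_univ y)).trans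
    (single_le_sum (fun x _ => sum_nonneg fun y _ => hg l x y) (mem_univ x))

end Distributions

section Mixture
variable {Ω O : Type*} [Fintype Ω] [Fintype O]

lemma sum_sum_mul_comm (w : Ω → ℝ) (K : Ω → O → ℝ) :
    ∑ o, ∑ ω, w ω * K ω o = ∑ ω, w ω * ∑ o, K ω o := by
  rw [sum_comm]; simp only [mul_sum]

lemma kernel_eq_zero_of_sum_ite_eq_one {w : Ω → ℝ} {K : Ω → O → ℝ} (hw : ∀ ω, 0 ≤ w ω)
    (hw1 : ∑ ω, w ω = 1) (hK : ∀ ω o, 0 ≤ K ω o) (hK1 : ∀ ω, ∑ o, K ω o = 1)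
    {S : O → Prop} [DecidablePred S]
    (hS : ∑ o, (if S o then ∑ ω, w ω * K ω o else 0) = 1)
    {ω : Ω} (hω : 0 < w ω) {o : O} (ho : ¬ S o) : K ω o = 0 := by
  have hnn : ∀ o ω, 0 ≤ w ω * K ω o := fun o ω => mul_nonneg (hw ω) (hK ω o)
  have htotal : ∑ o, ∑ ω, w ω * K ω o = 1 := by simp [sum_sum_mul_comm, hK1, hw1]
  rw [← sum_filter] at hS
  have hout : ∑ o ∈ univ.filter (¬ S ·), ∑ ω, w ω * K ω o = 0 := by
    linarith [sum_filter_add_sum_filter_not univ S fun o => ∑ ω, w ω * K ω o]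
  have hterm := (sum_eq_zero_iff_of_nonneg fun o _ => sum_nonneg fun ω _ => hnn o ω).1 hout o
    (by simpa using ho)
  exact ((sum_eq_zero_iff_of_nonneg fun ω _ => hnn o ω).1 hterm ω (mem_univ ω)
    |> mul_eq_zero.1).resolve_left hω.ne'

end Mixture

section Triangle
variable {Λ A B C XB XC YA YC : Type*} [Fintype Λ] [Fintype A] [Fintype B] [Fintype C]
  [Fintype XB] [Fintype XC] [Fintype YA] [Fintype YC]

lemma marginals_eq_of_consistent {p : XB → XC → ℝ} {q : YA → YC → ℝ} {r : XC → YC → ℝ}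
    (hp : ∑ aB, ∑ aC, p aB aC = 1) (hq : ∑ bA, ∑ bC, q bA bC = 1)
    (hr : ∑ cA, ∑ cB, r cA cB = 1)
    (h : ∀ aB aC bA bC cA cB, ¬(aC = cA ∧ bC = cB) → p aB aC * q bA bC * r cA cB = 0) :
    (∀ aC, ∑ aB, p aB aC = ∑ cB, r aC cB) ∧ (∀ bC, ∑ bA, q bA bC = ∑ cA, r cA bC) := by
  obtain ⟨aB, -, haB⟩ := exists_ne_zero_of_sum_ne_zero (hp ▸ one_ne_zero)
  obtain ⟨aC, -, hpa⟩ := exists_ne_zero_of_sum_ne_zero haB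
  obtain ⟨bA, -, hbA⟩ := exists_ne_zero_of_sum_ne_zero (hq ▸ one_ne_zero)
  obtain ⟨bC, -, hqb⟩ := exists_ne_zero_of_sum_ne_zero hbA
  refine ⟨sum_eq_sum_of_mul_eq_zero_of_ne hp hr fun aB' aC' cA cB hne => ?_,
    sum_eq_sum_of_mul_eq_zero_of_ne (r := fun bC cA => r cA bC) hq (by rwa [sum_comm])
      fun bA' bC' cB cA hne => ?_⟩
  · have := h aB' aC' bA bC cA cB fun hc => hne hc.1
    rw [mul_right_comm] at this
    exact (mul_eq_zero.1 this).resolve_right hqb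
  · have := h aB aC bA' bC' cA cB fun hc => hne hc.2
    rw [mul_assoc] at this
    exact (mul_eq_zero.1 this).resolve_left hpa

structure IsTriangleModel (pl : Λ → ℝ) (pc : Λ → A → B → C → ℝ)
    (ra : B → C → XB → XC → ℝ) (rb : A → C → YA → YC → ℝ) (rc : A → B → XC → YC → ℝ)
    (P : XB → XC → YA → YC → XC → YC → ℝ) : Prop where
  pl_nonneg : ∀ l, 0 ≤ pl l
  sum_pl : ∑ l, pl l = 1
  pc_nonneg : ∀ l α β γ, 0 ≤ pc l α β γ
  sum_pc : ∀ l, ∑ α, ∑ β, ∑ γ, pc l α β γ = 1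
  ra_nonneg : ∀ β γ aB aC, 0 ≤ ra β γ aB aC
  sum_ra : ∀ β γ, ∑ aB, ∑ aC, ra β γ aB aC = 1
  rb_nonneg : ∀ α γ bA bC, 0 ≤ rb α γ bA bC
  sum_rb : ∀ α γ, ∑ bA, ∑ bC, rb α γ bA bC = 1
  rc_nonneg : ∀ α β cA cB, 0 ≤ rc α β cA cB
  sum_rc : ∀ α β, ∑ cA, ∑ cB, rc α β cA cB = 1
  eq_sum : ∀ aB aC bA bC cA cB, P aB aC bA bC cA cB =
    ∑ l, ∑ α, ∑ β, ∑ γ, pl l * pc l α β γ * ra β γ aB aC * rb α γ bA bC * rc α β cA cB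

def IsTriangleConsistent [DecidableEq XC] [DecidableEq YC]
    (P : XB → XC → YA → YC → XC → YC → ℝ) : Prop :=
  ∑ aB, ∑ aC, ∑ bA, ∑ bC, ∑ cA, ∑ cB,
    (if aC = cA ∧ bC = cB then P aB aC bA bC cA cB else 0) = 1

lemma weight_pos_of_weight_pos {pl : Λ → ℝ} {pc : Λ → A → B → C → ℝ}
    {pA : A → ℝ} {pB : B → ℝ} {pC : C → ℝ} {ε₁ : ℝ}
    (hpl : ∀ l, 0 ≤ pl l) (hpc : ∀ l α β γ, 0 ≤ pc l α β γ)
    (hpA : ∀ α, pA α = ∑ l, pl l * ∑ β, ∑ γ, pc l α β γ)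
    (hpB : ∀ β, pB β = ∑ l, pl l * ∑ α, ∑ γ, pc l α β γ)
    (hε₁ : 0 < ε₁) (hlb : ∀ l α β γ, ε₁ * (pA α * pB β * pC γ) ≤ pc l α β γ)
    {l : Λ} {α : A} {β : B} {γ γ' : C} (hw : 0 < pl l * pc l α β γ) (hγ' : 0 < pC γ') :
    0 < pl l * pc l α β γ' := by
  have hα : 0 < pA α := hpA α ▸ sum_mul_sum_sum_pos (g := fun l β γ => pc l α β γ) hpl
    (fun _ _ _ => hpc _ _ _ _) hw
  have hβ : 0 < pB β := hpB β ▸ sum_mul_sum_sum_pos (g := fun l α γ => pc l α β γ) hpl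
    (fun _ _ _ => hpc _ _ _ _) hw
  exact mul_pos (pos_of_mul_pos_left hw (hpc _ _ _ _))
    ((by positivity : 0 < ε₁ * (pA α * pB β * pC γ')).trans_le (hlb _ _ _ _))

lemma sum_weight_mul_eq_sum_pA {pl : Λ → ℝ} {pc : Λ → A → B → C → ℝ} {pA : A → ℝ}
    (hpA : ∀ α, pA α = ∑ l, pl l * ∑ β, ∑ γ, pc l α β γ) (h : A → ℝ) :
    ∑ l, ∑ α, ∑ β, ∑ γ, pl l * pc l α β γ * h α = ∑ α, pA α * h α := by
  simp only [hpA, sum_mul, mul_sum]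
  exact sum_comm

lemma sum_weight_mul_eq_sum_pB {pl : Λ → ℝ} {pc : Λ → A → B → C → ℝ} {pB : B → ℝ}
    (hpB : ∀ β, pB β = ∑ l, pl l * ∑ α, ∑ γ, pc l α β γ) (h : B → ℝ) :
    ∑ l, ∑ α, ∑ β, ∑ γ, pl l * pc l α β γ * h β = ∑ β, pB β * h β := by
  simp only [hpB, sum_mul, mul_sum]
  rw [sum_comm (s := univ (α := B))]
  exact sum_congr rfl fun l _ => sum_comm

lemma sum_weight_mul_eq_sum_pC {pl : Λ → ℝ} {pc : Λ → A → B → C → ℝ} {pC : C → ℝ}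
    (hpC : ∀ γ, pC γ = ∑ l, pl l * ∑ α, ∑ β, pc l α β γ) (f g : C → ℝ) :
    ∑ l, ∑ γ, pl l * (∑ α, ∑ β, pc l α β γ) * f γ * g γ = ∑ γ, pC γ * f γ * g γ := by
  simp only [hpC, sum_mul]
  exact sum_comm

lemma sum_weight_mul_product {pl : Λ → ℝ} (hpl1 : ∑ l, pl l = 1)
    (pA : A → ℝ) (pB : B → ℝ) (pC : C → ℝ) (f : B → C → ℝ) (g : A → C → ℝ) :
    ∑ l, ∑ α, ∑ β, ∑ γ, pl l * (pA α * pB β * pC γ) * (f β γ * g α γ)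
      = ∑ γ, pC γ * (∑ β, pB β * f β γ) * (∑ α, pA α * g α γ) := by
  rw [← one_mul (∑ γ, pC γ * _ * _), ← hpl1, sum_mul]
  refine sum_congr rfl fun l _ => ?_
  simp only [mul_sum, sum_mul]
  rw [sum_congr rfl fun α _ => sum_comm, sum_comm]
  refine sum_congr rfl fun γ _ => sum_congr rfl fun α _ => sum_congr rfl fun β _ => ?_
  ring

lemma le_sum_weight_mul {pl : Λ → ℝ} {pc : Λ → A → B → C → ℝ}
    {pA : A → ℝ} {pB : B → ℝ} {pC : C → ℝ} {ε₁ : ℝ}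
    (hpl : ∀ l, 0 ≤ pl l) (hpl1 : ∑ l, pl l = 1)
    (hlb : ∀ l α β γ, ε₁ * (pA α * pB β * pC γ) ≤ pc l α β γ)
    {f : B → C → ℝ} {g : A → C → ℝ} (hf : ∀ β γ, 0 ≤ f β γ) (hg : ∀ α γ, 0 ≤ g α γ) :
    ε₁ * ∑ γ, pC γ * (∑ β, pB β * f β γ) * (∑ α, pA α * g α γ) ≤
      ∑ l, ∑ α, ∑ β, ∑ γ, pl l * pc l α β γ * (f β γ * g α γ) := by
  rw [← sum_weight_mul_product hpl1]
  simp only [mul_sum]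
  refine sum_le_sum fun l _ => sum_le_sum fun α _ => sum_le_sum fun β _ => sum_le_sum fun γ _ => ?_
  calc ε₁ * (pl l * (pA α * pB β * pC γ) * (f β γ * g α γ))
      = pl l * (ε₁ * (pA α * pB β * pC γ)) * (f β γ * g α γ) := by ring
    _ ≤ pl l * pc l α β γ * (f β γ * g α γ) :=
      mul_le_mul_of_nonneg_right (mul_le_mul_of_nonneg_left (hlb l α β γ) (hpl l))
        (mul_nonneg (hf β γ) (hg α γ))

namespace IsTriangleModel
variable {pl : Λ → ℝ} {pc : Λ → A → B → C → ℝ} {ra : B → C → XB → XC → ℝ}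
  {rb : A → C → YA → YC → ℝ} {rc : A → B → XC → YC → ℝ} {P : XB → XC → YA → YC → XC → YC → ℝ}

lemma eq_sum_prod (hM : IsTriangleModel pl pc ra rb rc P) (aB aC bA bC cA cB) :
    P aB aC bA bC cA cB = ∑ ω : Λ × A × B × C, pl ω.1 * pc ω.1 ω.2.1 ω.2.2.1 ω.2.2.2 *
      (ra ω.2.2.1 ω.2.2.2 aB aC * rb ω.2.1 ω.2.2.2 bA bC * rc ω.2.1 ω.2.2.1 cA cB) := by
  simp only [hM.eq_sum, Fintype.sum_prod_type, mul_assoc]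

lemma sum_sum_eq (hM : IsTriangleModel pl pc ra rb rc P) (aB aC bA bC) :
    ∑ cA, ∑ cB, P aB aC bA bC cA cB =
      ∑ l, ∑ α, ∑ β, ∑ γ, pl l * pc l α β γ * (ra β γ aB aC * rb α γ bA bC) := by
  simp only [← Fintype.sum_prod_type']
  simp only [hM.eq_sum_prod, sum_sum_mul_comm]
  simp only [Fintype.sum_prod_type, ← mul_sum, hM.sum_rc, mul_one]

lemma marginal_aC_eq (hM : IsTriangleModel pl pc ra rb rc P) (aC) :
    ∑ aB, ∑ bA, ∑ bC, ∑ cA, ∑ cB, P aB aC bA bC cA cB =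
      ∑ l, ∑ α, ∑ β, ∑ γ, pl l * pc l α β γ * ∑ aB, ra β γ aB aC := by
  simp only [← Fintype.sum_prod_type']
  simp only [hM.eq_sum_prod, sum_sum_mul_comm]
  simp only [Fintype.sum_prod_type, ← mul_sum, hM.sum_rc, hM.sum_rb, mul_one]

lemma marginal_bC_eq (hM : IsTriangleModel pl pc ra rb rc P) (bC) :
    ∑ aB, ∑ aC, ∑ bA, ∑ cA, ∑ cB, P aB aC bA bC cA cB =
      ∑ l, ∑ α, ∑ β, ∑ γ, pl l * pc l α β γ * ∑ bA, rb α γ bA bC := by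
  simp only [← Fintype.sum_prod_type']
  simp only [hM.eq_sum_prod, sum_sum_mul_comm]
  simp only [Fintype.sum_prod_type, ← mul_sum, ← sum_mul, hM.sum_rc, hM.sum_ra, mul_one, one_mul]

variable [DecidableEq XC] [DecidableEq YC]

lemma marginals_eq_rc_of_weight_pos (hM : IsTriangleModel pl pc ra rb rc P)
    (hcons : IsTriangleConsistent P) {l : Λ} {α : A} {β : B} {γ : C}
    (hw : 0 < pl l * pc l α β γ) :
    (∀ aC, ∑ aB, ra β γ aB aC = ∑ cB, rc α β aC cB) ∧
      (∀ bC, ∑ bA, rb α γ bA bC = ∑ cA, rc α β cA bC) := by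
  refine marginals_eq_of_consistent (hM.sum_ra β γ) (hM.sum_rb α γ) (hM.sum_rc α β)
    fun aB aC bA bC cA cB hne => ?_
  refine kernel_eq_zero_of_sum_ite_eq_one
    (w := fun ω : Λ × A × B × C => pl ω.1 * pc ω.1 ω.2.1 ω.2.2.1 ω.2.2.2)
    (K := fun ω (o : XB × XC × YA × YC × XC × YC) => ra ω.2.2.1 ω.2.2.2 o.1 o.2.1 *
      rb ω.2.1 ω.2.2.2 o.2.2.1 o.2.2.2.1 * rc ω.2.1 ω.2.2.1 o.2.2.2.2.1 o.2.2.2.2.2)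
    (S := fun o => o.2.1 = o.2.2.2.2.1 ∧ o.2.2.2.1 = o.2.2.2.2.2)
    (fun ω => mul_nonneg (hM.pl_nonneg _) (hM.pc_nonneg _ _ _ _)) ?_
    (fun ω o => mul_nonneg (mul_nonneg (hM.ra_nonneg _ _ _ _) (hM.rb_nonneg _ _ _ _))
      (hM.rc_nonneg _ _ _ _)) ?_ ?_ (ω := (l, α, β, γ)) hw (o := (aB, aC, bA, bC, cA, cB)) hne
  · simp [Fintype.sum_prod_type, ← mul_sum, hM.sum_pc, hM.sum_pl]
  · simp [Fintype.sum_prod_type, ← mul_sum, hM.sum_rc, hM.sum_rb, hM.sum_ra]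
  · simpa only [IsTriangleConsistent, Fintype.sum_prod_type, hM.eq_sum_prod] using hcons

lemma marginals_eq_of_weight_pos (hM : IsTriangleModel pl pc ra rb rc P)
    (hcons : IsTriangleConsistent P) {pC : C → ℝ}
    (hsupp : ∀ l α β γ γ', 0 < pl l * pc l α β γ → 0 < pC γ' → 0 < pl l * pc l α β γ')
    {l : Λ} {α : A} {β : B} {γ γ' : C} (hw : 0 < pl l * pc l α β γ) (hγ' : 0 < pC γ') :
    (∀ aC, ∑ aB, ra β γ aB aC = ∑ aB, ra β γ' aB aC) ∧
      (∀ bC, ∑ bA, rb α γ bA bC = ∑ bA, rb α γ' bA bC) := by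
  obtain ⟨hA, hB⟩ := hM.marginals_eq_rc_of_weight_pos hcons hw
  obtain ⟨hA', hB'⟩ := hM.marginals_eq_rc_of_weight_pos hcons (hsupp l α β γ γ' hw hγ')
  exact ⟨fun aC => (hA aC).trans (hA' aC).symm, fun bC => (hB bC).trans (hB' bC).symm⟩

lemma marginal_aC_eq_sum_pB (hM : IsTriangleModel pl pc ra rb rc P)
    (hcons : IsTriangleConsistent P) {pB : B → ℝ} {pC : C → ℝ}
    (hpB : ∀ β, pB β = ∑ l, pl l * ∑ α, ∑ γ, pc l α β γ)
    (hsupp : ∀ l α β γ γ', 0 < pl l * pc l α β γ → 0 < pC γ' → 0 < pl l * pc l α β γ')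
    {γ : C} (hγ : 0 < pC γ) (aC : XC) :
    ∑ aB, ∑ bA, ∑ bC, ∑ cA, ∑ cB, P aB aC bA bC cA cB = ∑ aB, ∑ β, pB β * ra β γ aB aC := by
  rw [hM.marginal_aC_eq, sum_comm (s := univ (α := XB))]
  simp only [← mul_sum]
  rw [← sum_weight_mul_eq_sum_pB hpB]
  refine sum_congr rfl fun l _ => sum_congr rfl fun α _ => sum_congr rfl fun β _ =>
    sum_congr rfl fun γ' _ => ?_
  rcases (mul_nonneg (hM.pl_nonneg l) (hM.pc_nonneg l α β γ')).eq_or_lt with hw | hw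
  · rw [← hw, zero_mul, zero_mul]
  · rw [(hM.marginals_eq_of_weight_pos hcons hsupp hw hγ).1]

lemma marginal_bC_eq_sum_pA (hM : IsTriangleModel pl pc ra rb rc P)
    (hcons : IsTriangleConsistent P) {pA : A → ℝ} {pC : C → ℝ}
    (hpA : ∀ α, pA α = ∑ l, pl l * ∑ β, ∑ γ, pc l α β γ)
    (hsupp : ∀ l α β γ γ', 0 < pl l * pc l α β γ → 0 < pC γ' → 0 < pl l * pc l α β γ')
    {γ : C} (hγ : 0 < pC γ) (bC : YC) :
    ∑ aB, ∑ aC, ∑ bA, ∑ cA, ∑ cB, P aB aC bA bC cA cB = ∑ bA, ∑ α, pA α * rb α γ bA bC := by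
  rw [hM.marginal_bC_eq, sum_comm (s := univ (α := YA))]
  simp only [← mul_sum]
  rw [← sum_weight_mul_eq_sum_pA hpA]
  refine sum_congr rfl fun l _ => sum_congr rfl fun α _ => sum_congr rfl fun β _ =>
    sum_congr rfl fun γ' _ => ?_
  rcases (mul_nonneg (hM.pl_nonneg l) (hM.pc_nonneg l α β γ')).eq_or_lt with hw | hw
  · rw [← hw, zero_mul, zero_mul]
  · rw [(hM.marginals_eq_of_weight_pos hcons hsupp hw hγ).2]

lemma mul_sum_averagedResponse_le (hM : IsTriangleModel pl pc ra rb rc P)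
    (hcons : IsTriangleConsistent P) {pA : A → ℝ} {pB : B → ℝ} {pC : C → ℝ} {ε₁ : ℝ}
    (hpA : ∀ α, pA α = ∑ l, pl l * ∑ β, ∑ γ, pc l α β γ)
    (hpB : ∀ β, pB β = ∑ l, pl l * ∑ α, ∑ γ, pc l α β γ)
    (hpC : ∀ γ, pC γ = ∑ l, pl l * ∑ α, ∑ β, pc l α β γ)
    (hε₁ : 0 < ε₁) (hlb : ∀ l α β γ, ε₁ * (pA α * pB β * pC γ) ≤ pc l α β γ)
    {mA mB : ℝ} (hmB0 : 0 ≤ mB) {aC : XC} {bC : YC}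
    (hmA : mA ≤ ∑ aB, ∑ bA, ∑ bC, ∑ cA, ∑ cB, P aB aC bA bC cA cB)
    (hmB : mB ≤ ∑ aB, ∑ aC, ∑ bA, ∑ cA, ∑ cB, P aB aC bA bC cA cB) (aB : XB) (bA : YA) :
    ε₁ * (mA * mB *
        ∑ γ, pC γ * averagedResponse pB ra aC γ aB * averagedResponse pA rb bC γ bA) ≤
      ∑ cA, ∑ cB, P aB aC bA bC cA cB := by
  have hsupp : ∀ l α β γ γ', 0 < pl l * pc l α β γ → 0 < pC γ' → 0 < pl l * pc l α β γ' :=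
    fun _ _ _ _ _ => weight_pos_of_weight_pos hM.pl_nonneg hM.pc_nonneg hpA hpB hε₁ hlb
  have hpA0 : ∀ α, 0 ≤ pA α := fun α =>
    hpA α ▸ sum_mul_sum_sum_nonneg hM.pl_nonneg fun l β γ => hM.pc_nonneg l α β γ
  have hpB0 : ∀ β, 0 ≤ pB β := fun β =>
    hpB β ▸ sum_mul_sum_sum_nonneg hM.pl_nonneg fun l α γ => hM.pc_nonneg l α β γ
  have hpC0 : ∀ γ, 0 ≤ pC γ := fun γ =>
    hpC γ ▸ sum_mul_sum_sum_nonneg hM.pl_nonneg fun l α β => hM.pc_nonneg l α β γ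
  calc ε₁ * (mA * mB *
        ∑ γ, pC γ * averagedResponse pB ra aC γ aB * averagedResponse pA rb bC γ bA)
      ≤ ε₁ * ∑ γ, pC γ * (∑ β, pB β * ra β γ aB aC) * (∑ α, pA α * rb α γ bA bC) := by
        rw [mul_sum]
        refine mul_le_mul_of_nonneg_left (sum_le_sum fun γ _ => mul_mul_normalizeOrUniform_le
          (fun aB => sum_nonneg fun β _ => mul_nonneg (hpB0 β) (hM.ra_nonneg β γ aB aC))
          (fun bA => sum_nonneg fun α _ => mul_nonneg (hpA0 α) (hM.rb_nonneg α γ bA bC))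
          (hpC0 γ) hmB0 (fun hγ => ⟨?_, ?_⟩) aB bA) hε₁.le
        · rw [← hM.marginal_aC_eq_sum_pB hcons hpB hsupp hγ]; exact hmA
        · rw [← hM.marginal_bC_eq_sum_pA hcons hpA hsupp hγ]; exact hmB
    _ ≤ ∑ l, ∑ α, ∑ β, ∑ γ, pl l * pc l α β γ * (ra β γ aB aC * rb α γ bA bC) :=
        le_sum_weight_mul hM.pl_nonneg hM.sum_pl hlb (fun β γ => hM.ra_nonneg β γ aB aC)
          fun α γ => hM.rb_nonneg α γ bA bC
    _ = ∑ cA, ∑ cB, P aB aC bA bC cA cB := (hM.sum_sum_eq aB aC bA bC).symm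

end IsTriangleModel
end Triangle

theorem trilocal_lemma_lower_bound_general
    {Λ A B C : Type*} [Fintype Λ] [Fintype A] [Fintype B] [Fintype C]
    (pl : Λ → ℝ) (pc : Λ → A → B → C → ℝ)
    (hpl : ∀ l, 0 ≤ pl l) (hpl1 : ∑ l, pl l = 1)
    (hpc : ∀ l α β γ, 0 ≤ pc l α β γ)
    (hpc1 : ∀ l, ∑ α, ∑ β, ∑ γ, pc l α β γ = 1)
    (pA : A → ℝ) (pB : B → ℝ) (pC : C → ℝ)
    (hpA : ∀ α, pA α = ∑ l, pl l * ∑ β, ∑ γ, pc l α β γ)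
    (hpB : ∀ β, pB β = ∑ l, pl l * ∑ α, ∑ γ, pc l α β γ)
    (hpC : ∀ γ, pC γ = ∑ l, pl l * ∑ α, ∑ β, pc l α β γ)
    (ε₁ ε₂ : ℝ) (hε₁ : 0 < ε₁) (hε₁' : ε₁ ≤ 1) (hε₂ : 1 ≤ ε₂)
    (hlb : ∀ l α β γ, ε₁ * (pA α * pB β * pC γ) ≤ pc l α β γ)
    -- local response kernels: a = (a_B,a_C) from (β,γ), b = (b_A,b_C) from (α,γ),
    -- c = (c_A,c_B) from (α,β), Charlie deterministic
    (ra : B → C → Fin 2 → Fin 2 → ℝ) (rb : A → C → Fin 2 → Fin 2 → ℝ)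
    (rc : A → B → Fin 2 → Fin 2 → ℝ)
    (hra0 : ∀ β γ aB aC, 0 ≤ ra β γ aB aC) (hra1 : ∀ β γ, ∑ aB, ∑ aC, ra β γ aB aC = 1)
    (hrb0 : ∀ α γ bA bC, 0 ≤ rb α γ bA bC) (hrb1 : ∀ α γ, ∑ bA, ∑ bC, rb α γ bA bC = 1)
    (hrc0 : ∀ α β cA cB, rc α β cA cB = 0 ∨ rc α β cA cB = 1)
    (hrc1 : ∀ α β, ∑ cA, ∑ cB, rc α β cA cB = 1)
    -- the full behaviour
    (P : Fin 2 → Fin 2 → Fin 2 → Fin 2 → Fin 2 → Fin 2 → ℝ)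
    (hP : ∀ aB aC bA bC cA cB, P aB aC bA bC cA cB =
      ∑ l, ∑ α, ∑ β, ∑ γ, pl l * pc l α β γ *
        ra β γ aB aC * rb α γ bA bC * rc α β cA cB)
    -- consistency condition p(A_C = C_A ∧ B_C = C_B) = 1
    (hcons : ∑ aB, ∑ aC, ∑ bA, ∑ bC, ∑ cA, ∑ cB,
      (if aC = cA ∧ bC = cB then P aB aC bA bC cA cB else 0) = 1)
    -- marginals of the effective inputs
    (pAC pBC : Fin 2 → ℝ)
    (hpAC : ∀ x, pAC x = ∑ aB, ∑ bA, ∑ bC, ∑ cA, ∑ cB, P aB x bA bC cA cB)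
    (hpBC : ∀ y, pBC y = ∑ aB, ∑ aC, ∑ bA, ∑ cA, ∑ cB, P aB aC bA y cA cB)
    (mA mB : ℝ)
    (hmA : IsLeast {y : ℝ | 0 < y ∧ ∃ x, pAC x = y} mA)
    (hmB : IsLeast {y : ℝ | 0 < y ∧ ∃ x, pBC x = y} mB) :
    ∃ F G : Fin 2 → Fin 2 → Λ × C → ℝ,
      (∀ aC g, (∀ aB, 0 ≤ F aB aC g) ∧ ∑ aB, F aB aC g = 1) ∧
      (∀ bC g, (∀ bA, 0 ≤ G bA bC g) ∧ ∑ bA, G bA bC g = 1) ∧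
      ∀ aB bA aC bC, 0 < pAC aC → 0 < pBC bC →
        (ε₁ ^ 3 / ε₂ ^ 6) * mA * mB *
          (∑ l, ∑ γ, pl l * (∑ α, ∑ β, pc l α β γ) *
            F aB aC (l, γ) * G bA bC (l, γ))
          ≤ ∑ cA, ∑ cB, P aB aC bA bC cA cB := by
  have hM : IsTriangleModel pl pc ra rb rc P := ⟨hpl, hpl1, hpc, hpc1, hra0, hra1, hrb0, hrb1,
    fun α β cA cB => (hrc0 α β cA cB).elim (·.ge) (·.ge.trans' zero_le_one), hrc1, hP⟩
  have hpA0 : ∀ α, 0 ≤ pA α := fun α => hpA α ▸ sum_mul_sum_sum_nonneg hpl fun l β γ => hpc l α β γ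
  have hpB0 : ∀ β, 0 ≤ pB β := fun β => hpB β ▸ sum_mul_sum_sum_nonneg hpl fun l α γ => hpc l α β γ
  have hpC0 : ∀ γ, 0 ≤ pC γ := fun γ => hpC γ ▸ sum_mul_sum_sum_nonneg hpl fun l α β => hpc l α β γ
  have hF0 := averagedResponse_nonneg hpB0 hra0
  have hG0 := averagedResponse_nonneg hpA0 hrb0
  refine ⟨fun aB aC g => averagedResponse pB ra aC g.2 aB,
    fun bA bC g => averagedResponse pA rb bC g.2 bA,
    fun aC g => ⟨hF0 aC g.2, sum_normalizeOrUniform _⟩,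
    fun bC g => ⟨hG0 bC g.2, sum_normalizeOrUniform _⟩, fun aB bA aC bC haC hbC => ?_⟩
  have hξ : ε₁ ^ 3 / ε₂ ^ 6 ≤ ε₁ := div_le_of_le_mul₀ (by positivity) hε₁.le
    ((pow_le_of_le_one hε₁.le hε₁' three_ne_zero).trans
      (le_mul_of_one_le_right hε₁.le (one_le_pow₀ hε₂)))
  calc ε₁ ^ 3 / ε₂ ^ 6 * mA * mB * _
      = ε₁ ^ 3 / ε₂ ^ 6 * (mA * mB *
          ∑ γ, pC γ * averagedResponse pB ra aC γ aB * averagedResponse pA rb bC γ bA) := by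
        dsimp only
        rw [sum_weight_mul_eq_sum_pC hpC]
        ring
    _ ≤ ε₁ * _ := mul_le_mul_of_nonneg_right hξ (mul_nonneg (mul_nonneg hmA.1.1.le hmB.1.1.le)
        (sum_nonneg fun γ _ => mul_nonneg (mul_nonneg (hpC0 γ) (hF0 aC γ aB)) (hG0 bC γ bA)))
    _ ≤ ∑ cA, ∑ cB, P aB aC bA bC cA cB :=
        hM.mul_sum_averagedResponse_le hcons hpA hpB hpC hε₁ hlb hmB.1.1.le
          ((hmA.2 ⟨haC, aC, rfl⟩).trans_eq (hpAC aC))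
          ((hmB.2 ⟨hbC, bC, rfl⟩).trans_eq (hpBC bC)) aB bA

/-- Lower bound of Lemma 1: for an `ε₁`-trilocal behaviour on the triangle network
(with correlated sources satisfying the two-sided independence condition, deterministic
Charlie responses, and the consistency condition `p(A_C=C_A ∧ B_C=C_B)=1`), there exist
response distributions `F(a_B|a_C,γ')`, `G(b_A|b_C,γ')` over the effective hidden variable
`γ' = (λ,γ)` such that
`p(a_B,a_C,b_A,b_C) ≥ ξ₁ Σ_{γ'} p(γ') F(a_B|a_C,γ') G(b_A|b_C,γ')`
with `ξ₁ = (ε₁³/ε₂⁶)·min_{a_C:p(a_C)>0} p(a_C)·min_{b_C:p(b_C)>0} p(b_C)`. -/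
theorem trilocal_lemma_lower_bound
    {Λ A B C : Type*} [Fintype Λ] [Fintype A] [Fintype B] [Fintype C]
    (pl : Λ → ℝ) (pc : Λ → A → B → C → ℝ)
    (hpl : ∀ l, 0 ≤ pl l) (hpl1 : ∑ l, pl l = 1)
    (hpc : ∀ l α β γ, 0 ≤ pc l α β γ)
    (hpc1 : ∀ l, ∑ α, ∑ β, ∑ γ, pc l α β γ = 1)
    (pA : A → ℝ) (pB : B → ℝ) (pC : C → ℝ)
    (hpA : ∀ α, pA α = ∑ l, pl l * ∑ β, ∑ γ, pc l α β γ)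
    (hpB : ∀ β, pB β = ∑ l, pl l * ∑ α, ∑ γ, pc l α β γ)
    (hpC : ∀ γ, pC γ = ∑ l, pl l * ∑ α, ∑ β, pc l α β γ)
    (ε₁ ε₂ : ℝ) (hε₁ : 0 < ε₁) (hε₁' : ε₁ ≤ 1) (hε₂ : 1 ≤ ε₂)
    (hlb : ∀ l α β γ, ε₁ * (pA α * pB β * pC γ) ≤ pc l α β γ)
    (hub : ∀ l α β γ, pc l α β γ ≤ ε₂ * (pA α * pB β * pC γ))
    -- local response kernels: a = (a_B,a_C) from (β,γ), b = (b_A,b_C) from (α,γ),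
    -- c = (c_A,c_B) from (α,β), Charlie deterministic
    (ra : B → C → Fin 2 → Fin 2 → ℝ) (rb : A → C → Fin 2 → Fin 2 → ℝ)
    (rc : A → B → Fin 2 → Fin 2 → ℝ)
    (hra0 : ∀ β γ aB aC, 0 ≤ ra β γ aB aC) (hra1 : ∀ β γ, ∑ aB, ∑ aC, ra β γ aB aC = 1)
    (hrb0 : ∀ α γ bA bC, 0 ≤ rb α γ bA bC) (hrb1 : ∀ α γ, ∑ bA, ∑ bC, rb α γ bA bC = 1)
    (hrc0 : ∀ α β cA cB, rc α β cA cB = 0 ∨ rc α β cA cB = 1)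
    (hrc1 : ∀ α β, ∑ cA, ∑ cB, rc α β cA cB = 1)
    -- the full behaviour
    (P : Fin 2 → Fin 2 → Fin 2 → Fin 2 → Fin 2 → Fin 2 → ℝ)
    (hP : ∀ aB aC bA bC cA cB, P aB aC bA bC cA cB =
      ∑ l, ∑ α, ∑ β, ∑ γ, pl l * pc l α β γ *
        ra β γ aB aC * rb α γ bA bC * rc α β cA cB)
    -- consistency condition p(A_C = C_A ∧ B_C = C_B) = 1
    (hcons : ∑ aB, ∑ aC, ∑ bA, ∑ bC, ∑ cA, ∑ cB,
      (if aC = cA ∧ bC = cB then P aB aC bA bC cA cB else 0) = 1)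
    -- marginals of the effective inputs
    (pAC pBC : Fin 2 → ℝ)
    (hpAC : ∀ x, pAC x = ∑ aB, ∑ bA, ∑ bC, ∑ cA, ∑ cB, P aB x bA bC cA cB)
    (hpBC : ∀ y, pBC y = ∑ aB, ∑ aC, ∑ bA, ∑ cA, ∑ cB, P aB aC bA y cA cB)
    (mA mB : ℝ)
    (hmA : IsLeast {y : ℝ | 0 < y ∧ ∃ x, pAC x = y} mA)
    (hmB : IsLeast {y : ℝ | 0 < y ∧ ∃ x, pBC x = y} mB) :
    ∃ F G : Fin 2 → Fin 2 → Λ × C → ℝ,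
      (∀ aC g, (∀ aB, 0 ≤ F aB aC g) ∧ ∑ aB, F aB aC g = 1) ∧
      (∀ bC g, (∀ bA, 0 ≤ G bA bC g) ∧ ∑ bA, G bA bC g = 1) ∧
      ∀ aB bA aC bC, 0 < pAC aC → 0 < pBC bC →
        (ε₁ ^ 3 / ε₂ ^ 6) * mA * mB *
          (∑ l, ∑ γ, pl l * (∑ α, ∑ β, pc l α β γ) *
            F aB aC (l, γ) * G bA bC (l, γ))
          ≤ ∑ cA, ∑ cB, P aB aC bA bC cA cB :=
  trilocal_lemma_lower_bound_general pl pc hpl hpl1 hpc hpc1 pA pB pC hpA hpB hpC ε₁ ε₂ hε₁ hε₁' hε₂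
    hlb ra rb rc hra0 hra1 hrb0 hrb1 hrc0 hrc1 P hP hcons pAC pBC hpAC hpBC mA mB hmA hmB
end

section
/- In a deterministic trilocal hidden variable model for the coarse-grained RBBBGB outputs {↑,↓,χ} satisfying the relaxed independence condition p(α,β,γ|λ) ≥ ε₁ p(α)p(β)p(γ) with ε₁ > 0, the zero-probability constraints p(a=↑,b=↑) = p(a=↓,b=↓) = 0 (and cyclic analogues) force the sets Λ_{A,0} = {α : ∃γ, b(α,γ)=↓} and Λ_{A,1} = {α : ∃β, c(α,β)=↓} to be disjoint. That is, no hidden-variable value α can both enable Bob to output ↓ (for some γ) and enable Charlie to output ↓ (for some β). -/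
open Finset
open Fin.NatCast

/-! Some `λ` has `p(λ) > 0`, and relaxed independence gives `p(α,β,γ|λ) > 0` for every triple.
So if `b(α,γ) = c(α,β) = ↓`, the event `b = c = ↓` would have positive probability. -/

theorem eq_zero_of_sum_sum_sum_sum_eq_zero {ι κ μ ν M : Type*} [Fintype ι] [Fintype κ]
    [Fintype μ] [Fintype ν] [AddCommMonoid M] [PartialOrder M] [IsOrderedAddMonoid M]
    {f : ι → κ → μ → ν → M} (hf : ∀ i j k l, 0 ≤ f i j k l)
    (h : ∑ i, ∑ j, ∑ k, ∑ l, f i j k l = 0) (i : ι) (j : κ) (k : μ) (l : ν) :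
    f i j k l = 0 := by
  simp only [← Fintype.sum_prod_type'] at h
  exact congrFun ((Fintype.sum_eq_zero_iff_of_nonneg fun _ => hf _ _ _ _).1 h) (i, j, k, l)

theorem rbbbgb_disjointness_general
    {Λ A B C : Type*} [Fintype Λ] [Fintype A] [Fintype B] [Fintype C]
    (pl : Λ → ℝ) (pc : Λ → A → B → C → ℝ)
    (hpl : ∀ l, 0 ≤ pl l) (hpl1 : ∑ l, pl l = 1)
    (hpc : ∀ l α β γ, 0 ≤ pc l α β γ)
    (pA : A → ℝ) (pB : B → ℝ) (pC : C → ℝ)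
    (hApos : ∀ α, 0 < pA α) (hBpos : ∀ β, 0 < pB β) (hCpos : ∀ γ, 0 < pC γ)
    (ε₁ : ℝ) (hε₁ : 0 < ε₁)
    (hlb : ∀ l α β γ, ε₁ * (pA α * pB β * pC γ) ≤ pc l α β γ)
    -- deterministic responses, outputs in Fin 3 : 0 = ↑, 1 = ↓, 2 = χ
    (bR : A → C → Fin 3) (cR : A → B → Fin 3)
    -- zero-probability constraints and cyclic analogues
    (hbc : ∀ t : Fin 2, ∑ l, ∑ α, ∑ β, ∑ γ,
      (if bR α γ = (t : Fin 3) ∧ cR α β = (t : Fin 3) then pl l * pc l α β γ else 0) = 0) :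
    ∀ α, ¬ ((∃ γ, bR α γ = 1) ∧ (∃ β, cR α β = 1)) := by
  rintro α ⟨⟨γ, hbR⟩, β, hcR⟩
  obtain ⟨l, -, hl⟩ := exists_lt_of_sum_lt (s := univ) (f := 0) (g := pl) (by simp [hpl1])
  have hjoint : 0 < pc l α β γ :=
    lt_of_lt_of_le (by have := hApos α; have := hBpos β; have := hCpos γ; positivity)
      (hlb l α β γ)
  have hdown := eq_zero_of_sum_sum_sum_sum_eq_zero
    (fun l α β γ => ite_nonneg (mul_nonneg (hpl l) (hpc l α β γ)) le_rfl) (hbc 1) l α β γ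
  rw [if_pos ⟨hbR, hcR⟩] at hdown
  exact (mul_pos hl hjoint).ne' hdown

/-- RBBBGB disjointness: in a deterministic trilocal model for the coarse-grained outputs
`{↑,↓,χ}` (encoded as `0,1,2` in `Fin 3`) satisfying the relaxed independence condition
`p(α,β,γ|λ) ≥ ε₁ p(α)p(β)p(γ)` with `ε₁ > 0`, the zero-probability constraints
`p(a=↑,b=↑) = p(a=↓,b=↓) = 0` and cyclic analogues force `Λ_{A,0}` and `Λ_{A,1}` to be
disjoint: no `α` can both enable Bob to output `↓` and enable Charlie to output `↓`. -/
theorem rbbbgb_disjointness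
    {Λ A B C : Type*} [Fintype Λ] [Fintype A] [Fintype B] [Fintype C]
    (pl : Λ → ℝ) (pc : Λ → A → B → C → ℝ)
    (hpl : ∀ l, 0 ≤ pl l) (hpl1 : ∑ l, pl l = 1)
    (hpc : ∀ l α β γ, 0 ≤ pc l α β γ)
    (hpc1 : ∀ l, ∑ α, ∑ β, ∑ γ, pc l α β γ = 1)
    (pA : A → ℝ) (pB : B → ℝ) (pC : C → ℝ)
    (hpA : ∀ α, pA α = ∑ l, pl l * ∑ β, ∑ γ, pc l α β γ)
    (hpB : ∀ β, pB β = ∑ l, pl l * ∑ α, ∑ γ, pc l α β γ)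
    (hpC : ∀ γ, pC γ = ∑ l, pl l * ∑ α, ∑ β, pc l α β γ)
    (hApos : ∀ α, 0 < pA α) (hBpos : ∀ β, 0 < pB β) (hCpos : ∀ γ, 0 < pC γ)
    (ε₁ : ℝ) (hε₁ : 0 < ε₁)
    (hlb : ∀ l α β γ, ε₁ * (pA α * pB β * pC γ) ≤ pc l α β γ)
    -- deterministic responses, outputs in Fin 3 : 0 = ↑, 1 = ↓, 2 = χ
    (aR : B → C → Fin 3) (bR : A → C → Fin 3) (cR : A → B → Fin 3)
    -- zero-probability constraints and cyclic analogues
    (hab : ∀ t : Fin 2, ∑ l, ∑ α, ∑ β, ∑ γ,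
      (if aR β γ = (t : Fin 3) ∧ bR α γ = (t : Fin 3) then pl l * pc l α β γ else 0) = 0)
    (hbc : ∀ t : Fin 2, ∑ l, ∑ α, ∑ β, ∑ γ,
      (if bR α γ = (t : Fin 3) ∧ cR α β = (t : Fin 3) then pl l * pc l α β γ else 0) = 0)
    (hca : ∀ t : Fin 2, ∑ l, ∑ α, ∑ β, ∑ γ,
      (if cR α β = (t : Fin 3) ∧ aR β γ = (t : Fin 3) then pl l * pc l α β γ else 0) = 0) :
    ∀ α, ¬ ((∃ γ, bR α γ = 1) ∧ (∃ β, cR α β = 1)) :=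
  rbbbgb_disjointness_general pl pc hpl hpl1 hpc pA pB pC hApos hBpos hCpos ε₁ hε₁ hlb bR cR hbc
end
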